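/- arXiv:1105.0718 — 4 statements merged into one kernel-verified Lean document; each statement's English description precedes it below -/
import Mathlib

section
/- Let F : 𝕋 × X → ℂ be a continuous, compactly supported function and let U ⊆ X be an open set such that the support of F is contained in 𝕋 × U. Then for every ε > 0 there exist a natural number N, integers m₁, …, m_N, and continuous compactly supported functions f₁, …, f_N : X → ℂ with supp f_k ⊆ U for every k, such that sup_{(t,x) ∈ 𝕋 × X} |F(t,x) − Σ_{k=1}^N t^{m_k} f_k(x)| < ε, where t ∈ 𝕋 is regarded as a complex number of modulus one. -/
set_option maxHeartbeats 1000000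
set_option synthInstance.maxHeartbeats 400000

open Set Submodule

namespace DenseSpanCharAux

variable {X : Type*} [TopologicalSpace X]

/-- The basic generator `(t, x) ↦ t ^ m * f x` restricted to `univ ×ˢ L`. -/
noncomputable def gen (L : Set X) (m : ℤ) (f : C(X, ℂ)) :
    C(↥((Set.univ : Set Circle) ×ˢ L), ℂ) where
  toFun p := ((p.1.1 ^ m : Circle) : ℂ) * f p.1.2
  continuous_toFun := by
    have h1 : Continuous (fun t : Circle => ((t ^ m : Circle) : ℂ)) :=
      continuous_subtype_val.comp (continuous_zpow m)
    exact (h1.comp (continuous_fst.comp continuous_subtype_val)).mul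
      (f.continuous.comp (continuous_snd.comp continuous_subtype_val))

/-- The set of generators. -/
def G (L : Set X) : Set C(↥((Set.univ : Set Circle) ×ˢ L), ℂ) :=
  {g | ∃ m f, g = gen L m f}

lemma circleCoe_zpow (z : Circle) (m : ℤ) : ((z ^ m : Circle) : ℂ) = (z : ℂ) ^ m :=
  map_zpow' Circle.coeHom Circle.coe_inv z m

lemma gen_mul (L : Set X) (m m' : ℤ) (f f' : C(X, ℂ)) :
    gen L m f * gen L m' f' = gen L (m + m') (f * f') := by
  ext p
  simp only [gen, ContinuousMap.mul_apply, ContinuousMap.coe_mk, zpow_add, Circle.coe_mul]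
  ring

lemma gen_one (L : Set X) : gen L 0 (1 : C(X, ℂ)) = 1 := by
  ext p
  simp [gen]

lemma gen_star (L : Set X) (m : ℤ) (f : C(X, ℂ)) :
    star (gen L m f) = gen L (-m) (star f) := by
  ext p
  simp only [gen, ContinuousMap.star_apply, ContinuousMap.coe_mk, star_mul',
    ContinuousMap.coe_star, Pi.star_apply]
  congr 1
  rw [zpow_neg, Circle.coe_inv_eq_conj]
  rfl

lemma one_mem_span (L : Set X) : (1 : C(↥((Set.univ : Set Circle) ×ˢ L), ℂ)) ∈ span ℂ (G L) :=
  subset_span ⟨0, 1, (gen_one L).symm⟩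

lemma mul_mem_span (L : Set X) {a b : C(↥((Set.univ : Set Circle) ×ˢ L), ℂ)}
    (ha : a ∈ span ℂ (G L)) (hb : b ∈ span ℂ (G L)) : a * b ∈ span ℂ (G L) := by
  induction ha using Submodule.span_induction with
  | mem x hx =>
    induction hb using Submodule.span_induction with
    | mem y hy =>
      obtain ⟨m, f, rfl⟩ := hx
      obtain ⟨m', f', rfl⟩ := hy
      exact subset_span ⟨m + m', f * f', gen_mul L m m' f f'⟩
    | zero => simpa using zero_mem _
    | add y z _ _ hy hz => rw [mul_add]; exact add_mem hy hz
    | smul c y _ hy => rw [mul_smul_comm]; exact smul_mem _ _ hy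
  | zero => simpa using zero_mem _
  | add x y _ _ hx hy => rw [add_mul]; exact add_mem hx hy
  | smul c x _ hx => rw [smul_mul_assoc]; exact smul_mem _ _ hx

lemma star_mem_span (L : Set X) {a : C(↥((Set.univ : Set Circle) ×ˢ L), ℂ)}
    (ha : a ∈ span ℂ (G L)) : star a ∈ span ℂ (G L) := by
  induction ha using Submodule.span_induction with
  | mem x hx =>
    obtain ⟨m, f, rfl⟩ := hx
    exact subset_span ⟨-m, star f, gen_star L m f⟩
  | zero => simpa using zero_mem _
  | add x y _ _ hx hy => rw [star_add]; exact add_mem hx hy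
  | smul c x _ hx => rw [star_smul]; exact smul_mem _ _ hx

/-- The star subalgebra whose carrier is the span of the generators. -/
noncomputable def Alg (L : Set X) : StarSubalgebra ℂ C(↥((Set.univ : Set Circle) ×ˢ L), ℂ) where
  carrier := ↑(span ℂ (G L))
  add_mem' := add_mem
  zero_mem' := zero_mem _
  mul_mem' := mul_mem_span L
  one_mem' := one_mem_span L
  algebraMap_mem' c := by
    rw [Algebra.algebraMap_eq_smul_one]
    exact smul_mem _ _ (one_mem_span L)
  star_mem' := star_mem_span L

lemma mem_Alg_iff (L : Set X) (a : C(↥((Set.univ : Set Circle) ×ˢ L), ℂ)) :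
    a ∈ Alg L ↔ a ∈ span ℂ (G L) := Iff.rfl

end DenseSpanCharAux

open DenseSpanCharAux

/-- Let `X` be a locally compact Hausdorff space, let
`F : 𝕋 × X → ℂ` be continuous with compact support, and let `U ⊆ X` be open with
`supp F ⊆ 𝕋 × U`.  Then for every `ε > 0` there are finitely many integers `m k` and
continuous compactly supported functions `f k : X → ℂ` with support in `U` such that
`sup_{(t,x)} |F (t,x) - ∑ k, t ^ (m k) * f k x| < ε`. -/
theorem dense_span_characters_compactly_supported
    {X : Type*} [TopologicalSpace X] [LocallyCompactSpace X] [T2Space X]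
    (F : Circle × X → ℂ) (hFc : Continuous F) (hFsupp : HasCompactSupport F)
    (U : Set X) (hU : IsOpen U) (hFU : tsupport F ⊆ Set.univ ×ˢ U) :
    ∀ ε > (0 : ℝ), ∃ (N : ℕ) (m : Fin N → ℤ) (f : Fin N → X → ℂ),
      (∀ k, Continuous (f k) ∧ HasCompactSupport (f k) ∧ tsupport (f k) ⊆ U) ∧
      (⨆ p : Circle × X, ‖F p - ∑ k, (p.1 : ℂ) ^ (m k) * f k p.2‖) < ε := by
  intro ε hε
  -- the projection of the support of F to X
  set Kx : Set X := Prod.snd '' tsupport F with hKx_def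
  have hKxc : IsCompact Kx := hFsupp.image continuous_snd
  have hKxU : Kx ⊆ U := by
    rintro x ⟨p, hp, rfl⟩
    exact (hFU hp).2
  -- interpolate a compact set L between Kx and U
  obtain ⟨L, hLc, hKL, hLU⟩ := exists_compact_between hKxc hU hKxU
  -- a bump function φ : 1 on Kx, 0 outside interior L
  obtain ⟨φ, hφ1, hφ0, hφc, hφ01⟩ :=
    exists_continuous_one_zero_of_isCompact hKxc isOpen_interior.isClosed_compl
      (disjoint_compl_right_iff_subset.mpr hKL)
  -- the compact set S = univ ×ˢ L
  have hScomp : IsCompact ((Set.univ : Set Circle) ×ˢ L) := isCompact_univ.prod hLc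
  haveI : CompactSpace ↥((Set.univ : Set Circle) ×ˢ L) := isCompact_iff_compactSpace.mp hScomp
  -- the restriction of F to S
  set F' : C(↥((Set.univ : Set Circle) ×ˢ L), ℂ) :=
    ⟨fun p => F p.1, hFc.comp continuous_subtype_val⟩ with hF'_def
  -- the algebra separates points
  have hsep : (Alg L).SeparatesPoints := by
    intro p q hpq
    by_cases hx : (p : Circle × X).2 = (q : Circle × X).2
    · have ht : (p : Circle × X).1 ≠ (q : Circle × X).1 := by
        intro h
        exact hpq (Subtype.ext (Prod.ext h hx))
      refine ⟨gen L 1 1, ⟨gen L 1 1, subset_span ⟨1, 1, rfl⟩, rfl⟩, ?_⟩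
      simp only [gen, ContinuousMap.coe_mk, zpow_one, ContinuousMap.one_apply, mul_one]
      exact fun h => ht (Circle.coe_injective h)
    · obtain ⟨ψ, hψ1, hψ0, -, -⟩ :=
        exists_continuous_one_zero_of_isCompact
          (isCompact_singleton : IsCompact {(p : Circle × X).2}) isClosed_singleton
          (Set.disjoint_singleton.mpr hx)
      set ψ' : C(X, ℂ) := ⟨fun y => (ψ y : ℂ), Complex.continuous_ofReal.comp ψ.continuous⟩
      refine ⟨gen L 0 ψ', ⟨gen L 0 ψ', subset_span ⟨0, ψ', rfl⟩, rfl⟩, ?_⟩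
      simp only [gen, ContinuousMap.coe_mk, zpow_zero, one_mul, ψ']
      rw [hψ1 rfl, hψ0 rfl]
      norm_num
  -- Stone–Weierstrass
  have hdense := ContinuousMap.starSubalgebra_topologicalClosure_eq_top_of_separatesPoints
    (Alg L) hsep
  have hF'cl : F' ∈ closure ((Alg L : Set C(↥((Set.univ : Set Circle) ×ˢ L), ℂ))) := by
    have : F' ∈ (Alg L).topologicalClosure := by rw [hdense]; trivial
    exact this
  obtain ⟨g, hgA, hgdist⟩ := Metric.mem_closure_iff.mp hF'cl (ε / 2) (half_pos hε)
  -- decompose g as a finite linear combination of generators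
  obtain ⟨n, c, gs, hg⟩ := mem_span_set'.mp hgA
  choose m f hgs using fun i => (gs i).2
  -- the final functions
  refine ⟨n, m, fun k x => c k * f k x * (φ x : ℂ), fun k => ?_, ?_⟩
  · -- continuity, compact support, support in U
    have hsupp : Function.support (fun x => c k * f k x * (φ x : ℂ)) ⊆ interior L := by
      intro x hx
      by_contra hxL
      have h0 : φ x = 0 := hφ0 hxL
      exact hx (by simp [h0])
    have htsupp : tsupport (fun x => c k * f k x * (φ x : ℂ)) ⊆ L :=
      (closure_mono hsupp).trans (closure_minimal interior_subset hLc.isClosed)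
    refine ⟨?_, ?_, htsupp.trans hLU⟩
    · exact (continuous_const.mul (f k).continuous).mul
        (Complex.continuous_ofReal.comp φ.continuous)
    · exact hLc.of_isClosed_subset isClosed_closure htsupp
  · -- the sup bound
    have key : ∀ p : Circle × X,
        ‖F p - ∑ k, (p.1 : ℂ) ^ (m k) * (c k * f k p.2 * (φ p.2 : ℂ))‖ ≤ dist F' g := by
      intro p
      have hFφ : F p = (φ p.2 : ℂ) * F p := by
        by_cases h : F p = 0
        · simp [h]
        · have hp : p ∈ tsupport F := subset_closure h
          rw [hφ1 ⟨p, hp, rfl⟩]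
          simp
      have hsum : ∀ t : Circle, ∀ x : X,
          ∑ k, (t : ℂ) ^ (m k) * (c k * f k x * (φ x : ℂ))
            = (φ x : ℂ) * ∑ k, c k * (((t ^ (m k) : Circle)) : ℂ) * f k x := by
        intro t x
        rw [Finset.mul_sum]
        refine Finset.sum_congr rfl fun k _ => ?_
        rw [circleCoe_zpow t (m k)]
        ring
      by_cases hxL : p.2 ∈ L
      · set q : ↥((Set.univ : Set Circle) ×ˢ L) := ⟨p, ⟨Set.mem_univ _, hxL⟩⟩
        have hgq : g q = ∑ k, c k * (((p.1 ^ (m k) : Circle)) : ℂ) * f k p.2 := by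
          rw [← hg]
          rw [ContinuousMap.coe_sum, Finset.sum_apply]
          refine Finset.sum_congr rfl fun k _ => ?_
          rw [ContinuousMap.coe_smul, Pi.smul_apply, hgs k, smul_eq_mul]
          show c k * ((((p.1 ^ (m k) : Circle)) : ℂ) * f k p.2)
            = c k * (((p.1 ^ (m k) : Circle)) : ℂ) * f k p.2
          ring
        calc ‖F p - ∑ k, (p.1 : ℂ) ^ (m k) * (c k * f k p.2 * (φ p.2 : ℂ))‖
            = ‖(φ p.2 : ℂ) * (F p - g q)‖ := by
              rw [hsum p.1 p.2, ← hgq, mul_sub, ← hFφ]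
          _ ≤ 1 * ‖F p - g q‖ := by
              rw [norm_mul]
              apply mul_le_mul_of_nonneg_right _ (norm_nonneg _)
              rw [Complex.norm_real]
              exact abs_le.mpr ⟨by linarith [(hφ01 p.2).1], (hφ01 p.2).2⟩
          _ = dist (F' q) (g q) := by rw [one_mul, dist_eq_norm]; rfl
          _ ≤ dist F' g := ContinuousMap.dist_apply_le_dist q
      · have hφ0' : φ p.2 = 0 := hφ0 fun h => hxL (interior_subset h)
        have h1 : F p = 0 := by rw [hFφ, hφ0']; simp
        have h2 : ∑ k, (p.1 : ℂ) ^ (m k) * (c k * f k p.2 * (φ p.2 : ℂ)) = 0 := by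
          rw [hsum p.1 p.2, hφ0']; simp
        rw [h1, h2]
        simpa using dist_nonneg
    calc (⨆ p : Circle × X, ‖F p - ∑ k, (p.1 : ℂ) ^ (m k) * (c k * f k p.2 * (φ p.2 : ℂ))‖)
        ≤ dist F' g := Real.iSup_le key dist_nonneg
      _ < ε / 2 := hgdist
      _ < ε := half_lt_self hε
end

section
/- Let ω be a normalized continuous 2-cocycle on H, let μ̌ denote the pushforward of μ under the inversion map γ ↦ γ⁻¹, let m, n ∈ ℤ, let F : 𝕋 × H → ℂ be continuous with compact support, and let ξ, ζ : H → ℂ be continuous with compact support. Then the iterated integral ∫_H ∫_𝕋 ∫_H ∫_𝕋 F(s t · ω(γ,η), γη) · s^m · ω(η,η⁻¹)^m · ξ(η⁻¹) · t^n · conj(ζ(γ)) ds dμ(η) dt dμ̌(γ) equals ∫_H ∫_H ( ∫_𝕋 F(s, γη) · s^m ds ) · ξ(η⁻¹) · conj(ζ(γ)) · ω(γη,η⁻¹)^m dμ(η) dμ̌(γ) if m = n, and equals 0 if m ≠ n. Here elements of 𝕋 and values of ω are regarded as complex numbers. -/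
/-! Translation invariance of `τ` in the variable `s` pulls the factor `(t ω(γ,η))^(-m)` out of
the innermost integral, and the cocycle identity turns `ω(γ,η)^(-m) ω(η,η⁻¹)^m` into
`ω(γη,η⁻¹)^m`. What remains of the `t`-integral is `∫ t^(n-m) dt`, which is `1` if `m = n` and
`0` otherwise (translating by a `k`-th root of `-1` negates `∫ t^k dt`). -/

open MeasureTheory
open scoped ComplexConjugate

noncomputable instance : MeasurableSpace Circle := borel Circle
instance : BorelSpace Circle := ⟨rfl⟩

theorem cocycle_mul_inv_eq {H G : Type*} [Group H] [Group G] {ω : H → H → G}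
    (hω : ∀ η γ ξ, ω η γ * ω (η * γ) ξ = ω γ ξ * ω η (γ * ξ)) (hω₁ : ∀ γ, ω γ 1 = 1)
    (γ η : H) : ω (γ * η) η⁻¹ = (ω γ η)⁻¹ * ω η η⁻¹ := by
  have h := hω γ η η⁻¹
  rw [mul_inv_cancel, hω₁, mul_one] at h
  exact eq_inv_mul_of_mul_eq h

section CircleIntegrals

variable (τ : Measure Circle) [τ.IsMulLeftInvariant]

theorem integral_circle_zpow [IsProbabilityMeasure τ] (k : ℤ) :
    ∫ t : Circle, (t : ℂ) ^ k ∂τ = if k = 0 then 1 else 0 := by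
  split_ifs with hk
  · simp [hk]
  set a : Circle := Circle.exp (Real.pi / k)
  have ha : (a : ℂ) ^ k = -1 := by
    have hk' : (k : ℂ) ≠ 0 := Int.cast_ne_zero.mpr hk
    rw [Circle.coe_exp, ← Complex.exp_int_mul]
    convert Complex.exp_pi_mul_I using 2
    push_cast
    field_simp
  have h : -∫ t : Circle, (t : ℂ) ^ k ∂τ = ∫ t : Circle, (t : ℂ) ^ k ∂τ := by
    simpa [mul_zpow, ha, integral_neg] using
      integral_mul_left_eq_self (μ := τ) (fun t : Circle => (t : ℂ) ^ k) a
  linear_combination -h / 2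

theorem integral_mul_right_mul_zpow (f : Circle → ℂ) (c : Circle) (m : ℤ) :
    ∫ s : Circle, f (s * c) * (s : ℂ) ^ m ∂τ =
      (∫ s : Circle, f s * (s : ℂ) ^ m ∂τ) * (c : ℂ) ^ (-m) := by
  have h := integral_mul_right_eq_self (μ := τ)
    (fun u : Circle => f u * ((u : ℂ) * (c : ℂ)⁻¹) ^ m) c
  simp only [Circle.coe_mul, mul_inv_cancel_right₀ (Circle.coe_ne_zero c)] at h
  rw [h, ← integral_mul_const]
  simp_rw [mul_zpow, inv_zpow, zpow_neg, mul_assoc]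

end CircleIntegrals

theorem leftRegular_matrix_coefficient_decomposition_general
    {H : Type*} [Group H]
    [MeasurableSpace H]
    (μ : Measure H)
    (τ : Measure Circle) [τ.IsHaarMeasure] [IsProbabilityMeasure τ]
    (ω : H → H → Circle)
    (hω_cocycle : ∀ η γ ξ' : H, ω η γ * ω (η * γ) ξ' = ω γ ξ' * ω η (γ * ξ'))
    (hω_norm : ∀ γ : H, ω 1 γ = 1 ∧ ω γ 1 = 1)
    (m n : ℤ) (F : Circle × H → ℂ)
    (ξ ζ : H → ℂ) :
    (∫ γ, ∫ t : Circle, ∫ η, ∫ s : Circle,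
        F (s * t * ω γ η, γ * η) * (s : ℂ) ^ m * (ω η η⁻¹ : ℂ) ^ m * ξ η⁻¹ *
          (t : ℂ) ^ n * conj (ζ γ) ∂τ ∂μ ∂τ ∂(Measure.map (fun γ : H => γ⁻¹) μ)) =
      if m = n then
        ∫ γ, ∫ η,
          (∫ s : Circle, F (s, γ * η) * (s : ℂ) ^ m ∂τ) * ξ η⁻¹ * conj (ζ γ) *
            (ω (γ * η) η⁻¹ : ℂ) ^ m ∂μ ∂(Measure.map (fun γ : H => γ⁻¹) μ)
      else 0 := by
  have inner (γ : H) (t : Circle) (η : H) :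
      ∫ s : Circle, F (s * t * ω γ η, γ * η) * (s : ℂ) ^ m * (ω η η⁻¹ : ℂ) ^ m * ξ η⁻¹ *
          (t : ℂ) ^ n * conj (ζ γ) ∂τ =
        (t : ℂ) ^ (n - m) * ((∫ s : Circle, F (s, γ * η) * (s : ℂ) ^ m ∂τ) * ξ η⁻¹ *
          conj (ζ γ) * (ω (γ * η) η⁻¹ : ℂ) ^ m) := by
    simp_rw [mul_assoc _ t, mul_assoc (F _ * _), integral_mul_const,
      integral_mul_right_mul_zpow τ (fun s => F (s, γ * η)),
      cocycle_mul_inv_eq hω_cocycle (fun γ => (hω_norm γ).2), Circle.coe_mul, Circle.coe_inv]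
    have ht := Circle.coe_ne_zero t
    have hw := Circle.coe_ne_zero (ω γ η)
    rw [zpow_sub₀ ht, zpow_neg, mul_zpow, mul_zpow, inv_zpow]
    field_simp
  simp_rw [inner, integral_const_mul, integral_mul_const, integral_circle_zpow, sub_eq_zero,
    eq_comm (a := n)]
  split_ifs <;> simp

/-- Let `H` be a locally compact second-countable Hausdorff group with
left Haar measure `μ`, let `μ̌` be the pushforward of `μ` under inversion, let `τ` be the
normalized Haar probability measure on the circle `𝕋`, and let `ω` be a normalized
continuous 2-cocycle on `H`.  For `m, n ∈ ℤ`, `F : 𝕋 × H → ℂ` continuous with compact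
support and `ξ, ζ : H → ℂ` continuous with compact support, the iterated integral
`∫_H ∫_𝕋 ∫_H ∫_𝕋 F (s t ω(γ,η), γη) s^m ω(η,η⁻¹)^m ξ(η⁻¹) t^n conj (ζ γ) ds dμ(η) dt dμ̌(γ)`
equals
`∫_H ∫_H (∫_𝕋 F (s, γη) s^m ds) ξ(η⁻¹) conj (ζ γ) ω(γη,η⁻¹)^m dμ(η) dμ̌(γ)` if `m = n`,
and equals `0` if `m ≠ n`. -/
theorem leftRegular_matrix_coefficient_decomposition
    {H : Type*} [Group H] [TopologicalSpace H] [IsTopologicalGroup H]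
    [LocallyCompactSpace H] [SecondCountableTopology H] [T2Space H]
    [MeasurableSpace H] [BorelSpace H]
    (μ : Measure H) [μ.IsHaarMeasure]
    (τ : Measure Circle) [τ.IsHaarMeasure] [IsProbabilityMeasure τ]
    (ω : H → H → Circle) (hω_cont : Continuous fun p : H × H => ω p.1 p.2)
    (hω_cocycle : ∀ η γ ξ' : H, ω η γ * ω (η * γ) ξ' = ω γ ξ' * ω η (γ * ξ'))
    (hω_norm : ∀ γ : H, ω 1 γ = 1 ∧ ω γ 1 = 1)
    (m n : ℤ) (F : Circle × H → ℂ) (hF : Continuous F) (hFsupp : HasCompactSupport F)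
    (ξ ζ : H → ℂ) (hξ : Continuous ξ) (hξsupp : HasCompactSupport ξ)
    (hζ : Continuous ζ) (hζsupp : HasCompactSupport ζ) :
    (∫ γ, ∫ t : Circle, ∫ η, ∫ s : Circle,
        F (s * t * ω γ η, γ * η) * (s : ℂ) ^ m * (ω η η⁻¹ : ℂ) ^ m * ξ η⁻¹ *
          (t : ℂ) ^ n * conj (ζ γ) ∂τ ∂μ ∂τ ∂(Measure.map (fun γ : H => γ⁻¹) μ)) =
      if m = n then
        ∫ γ, ∫ η,
          (∫ s : Circle, F (s, γ * η) * (s : ℂ) ^ m ∂τ) * ξ η⁻¹ * conj (ζ γ) *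
            (ω (γ * η) η⁻¹ : ℂ) ^ m ∂μ ∂(Measure.map (fun γ : H => γ⁻¹) μ)
      else 0 :=
  leftRegular_matrix_coefficient_decomposition_general μ τ ω hω_cocycle hω_norm m n F ξ ζ
end

section
/- Let ω be a normalized continuous 2-cocycle on H, let n ∈ ℤ, and let f, g : 𝕋 × H → ℂ be continuous, compactly supported and n-homogeneous. Then for all γ ∈ H, ∫_H ∫_𝕋 f(r,η) · g(r⁻¹ · ω(η,η⁻¹)⁻¹ · ω(η⁻¹,γ), η⁻¹γ) dr dμ(η) = ∫_H f(1,η) · g(1,η⁻¹γ) · ω(η,η⁻¹γ)^n dμ(η), where values of ω are regarded as complex numbers. -/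
open MeasureTheory

/-! The cocycle identity at `(η, η⁻¹, γ)` together with `ω 1 γ = 1` rewrites the second
argument of `g` as `(r ω(η, η⁻¹γ))⁻¹`. Homogeneity then makes the factors `r^{-n}` from `f` and
`r^n` from `g` cancel, so the inner integrand is constant in `r` and `τ` is a probability
measure. -/

def IsHomogeneous {X : Type*} (n : ℤ) (f : Circle × X → ℂ) : Prop :=
  ∀ (s t : Circle) (x : X), f (s * t, x) = (s : ℂ) ^ (-n) * f (t, x)

namespace IsHomogeneous

variable {X : Type*} {n : ℤ} {f g : Circle × X → ℂ}

theorem apply_eq_zpow_mul (hf : IsHomogeneous n f) (s : Circle) (x : X) :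
    f (s, x) = (s : ℂ) ^ (-n) * f (1, x) := by
  simpa using hf s 1 x

theorem mul_apply_inv (hf : IsHomogeneous n f) (hg : IsHomogeneous n g)
    (r w : Circle) (x y : X) :
    f (r, x) * g ((r * w)⁻¹, y) = f (1, x) * g (1, y) * (w : ℂ) ^ n := by
  have hr : (r : ℂ) ^ n ≠ 0 := zpow_ne_zero _ (Circle.coe_ne_zero r)
  rw [hf.apply_eq_zpow_mul, hg.apply_eq_zpow_mul, Circle.coe_inv, Circle.coe_mul, inv_zpow',
    neg_neg, mul_zpow, zpow_neg]
  field_simp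

end IsHomogeneous

theorem cocycle_mul_inv_eq_mul {G A : Type*} [Group G] [Monoid A] {ω : G → G → A}
    (hω : ∀ η γ ξ : G, ω η γ * ω (η * γ) ξ = ω γ ξ * ω η (γ * ξ))
    (hω₁ : ∀ γ : G, ω 1 γ = 1) (η γ : G) :
    ω η η⁻¹ = ω η⁻¹ γ * ω η (η⁻¹ * γ) := by
  simpa [hω₁] using hω η η⁻¹ γ

theorem convolution_at_one_eq_twisted_convolution_general
    {H : Type*} [Group H]
    [MeasurableSpace H]
    (μ : Measure H)
    (τ : Measure Circle) [IsProbabilityMeasure τ]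
    (ω : H → H → Circle)
    (hω_cocycle : ∀ η γ ξ : H, ω η γ * ω (η * γ) ξ = ω γ ξ * ω η (γ * ξ))
    (hω_norm : ∀ γ : H, ω 1 γ = 1 ∧ ω γ 1 = 1)
    (n : ℤ) (f g : Circle × H → ℂ)
    (hfhom : ∀ (s t : Circle) (γ : H), f (s * t, γ) = (s : ℂ) ^ (-n) * f (t, γ))
    (hghom : ∀ (s t : Circle) (γ : H), g (s * t, γ) = (s : ℂ) ^ (-n) * g (t, γ)) :
    ∀ γ : H,
      (∫ η, ∫ r : Circle,
          f (r, η) * g (r⁻¹ * (ω η η⁻¹)⁻¹ * ω η⁻¹ γ, η⁻¹ * γ) ∂τ ∂μ) =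
        ∫ η, f (1, η) * g (1, η⁻¹ * γ) * (ω η (η⁻¹ * γ) : ℂ) ^ n ∂μ := by
  intro γ
  congr 1 with η
  have harg (r : Circle) : r⁻¹ * (ω η η⁻¹)⁻¹ * ω η⁻¹ γ = (r * ω η (η⁻¹ * γ))⁻¹ := by
    rw [cocycle_mul_inv_eq_mul hω_cocycle (fun γ => (hω_norm γ).1) η γ]
    rw [mul_inv_rev, ← mul_assoc, inv_mul_cancel_right, mul_inv]
  simp_rw [harg, IsHomogeneous.mul_apply_inv hfhom hghom]
  simp

/-- Let `H` be a locally compact second-countable Hausdorff group with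
left Haar measure `μ`, `τ` the normalized Haar probability measure on the circle `𝕋`,
and `ω` a normalized continuous 2-cocycle on `H`.  Let `n ∈ ℤ` and let
`f, g : 𝕋 × H → ℂ` be continuous, compactly supported and `n`-homogeneous.  Then for all
`γ ∈ H`,
`∫_H ∫_𝕋 f (r, η) g (r⁻¹ ω(η,η⁻¹)⁻¹ ω(η⁻¹,γ), η⁻¹ γ) dr dμ(η)
  = ∫_H f (1, η) g (1, η⁻¹ γ) ω(η, η⁻¹ γ)^n dμ(η)`. -/
theorem convolution_at_one_eq_twisted_convolution
    {H : Type*} [Group H] [TopologicalSpace H] [IsTopologicalGroup H]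
    [LocallyCompactSpace H] [SecondCountableTopology H] [T2Space H]
    [MeasurableSpace H] [BorelSpace H]
    (μ : Measure H) [μ.IsHaarMeasure]
    (τ : Measure Circle) [τ.IsHaarMeasure] [IsProbabilityMeasure τ]
    (ω : H → H → Circle) (hω_cont : Continuous fun p : H × H => ω p.1 p.2)
    (hω_cocycle : ∀ η γ ξ : H, ω η γ * ω (η * γ) ξ = ω γ ξ * ω η (γ * ξ))
    (hω_norm : ∀ γ : H, ω 1 γ = 1 ∧ ω γ 1 = 1)
    (n : ℤ) (f g : Circle × H → ℂ)
    (hf : Continuous f) (hfsupp : HasCompactSupport f)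
    (hfhom : ∀ (s t : Circle) (γ : H), f (s * t, γ) = (s : ℂ) ^ (-n) * f (t, γ))
    (hg : Continuous g) (hgsupp : HasCompactSupport g)
    (hghom : ∀ (s t : Circle) (γ : H), g (s * t, γ) = (s : ℂ) ^ (-n) * g (t, γ)) :
    ∀ γ : H,
      (∫ η, ∫ r : Circle,
          f (r, η) * g (r⁻¹ * (ω η η⁻¹)⁻¹ * ω η⁻¹ γ, η⁻¹ * γ) ∂τ ∂μ) =
        ∫ η, f (1, η) * g (1, η⁻¹ * γ) * (ω η (η⁻¹ * γ) : ℂ) ^ n ∂μ :=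
  convolution_at_one_eq_twisted_convolution_general μ τ ω hω_cocycle hω_norm n f g hfhom hghom
end

section
/- Suppose that for every pair of objects u, v of G there is exactly one arrow with range u and source v (that is, G is principal and transitive). Then every normalized 2-cocycle ω on G with values in 𝕋 is a coboundary: there exists a function b from the arrows of G to 𝕋 such that ω(γ,η) = b(γ) · b(η) · b(γη)⁻¹ for every composable pair of arrows (γ,η). -/
open CategoryTheory

/-- If `G` is a principal and transitive groupoid (for every pair of
objects `u, v` there is exactly one arrow with range `u` and source `v`), then every
normalized 2-cocycle `ω` on `G` with values in the circle `𝕋` is a coboundary: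
there is `b` with `ω(γ,η) = b(γ) · b(η) · b(γη)⁻¹` for all composable `(γ,η)`.
An arrow with range `a` and source `b` is a morphism `b ⟶ a`, and the product of arrows
`γη` (defined when `s γ = r η`) is the categorical composite `η ≫ γ`. -/
theorem cocycle_isCoboundary_of_principal_transitive {G : Type*} [Groupoid G]
    (huniq : ∀ u v : G, Nonempty (v ⟶ u) ∧ Subsingleton (v ⟶ u))
    (ω : ∀ a b c : G, (b ⟶ a) → (c ⟶ b) → Circle)
    (hco : ∀ (a b c d : G) (γ : b ⟶ a) (η : c ⟶ b) (ξ : d ⟶ c),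
      ω a b c γ η * ω a c d (η ≫ γ) ξ = ω b c d η ξ * ω a b d γ (ξ ≫ η))
    (hnorm : ∀ (a b : G) (γ : b ⟶ a), ω a a b (𝟙 a) γ = 1 ∧ ω a b b γ (𝟙 b) = 1) :
    ∃ b : ∀ a c : G, (c ⟶ a) → Circle,
      ∀ (a c d : G) (γ : c ⟶ a) (η : d ⟶ c),
        ω a c d γ η = b a c γ * b c d η * (b a d (η ≫ γ))⁻¹ := by
  rcases isEmpty_or_nonempty G with hG | hG
  · exact ⟨fun a _ _ => 1, fun a => isEmptyElim a⟩
  · obtain ⟨e⟩ := hG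
    have sub : ∀ u v : G, Subsingleton (v ⟶ u) := fun u v => (huniq u v).2
    have t : ∀ c : G, (e ⟶ c) := fun c => (huniq c e).1.some

    refine ⟨fun a c γ => ω a c e γ (t c), fun a c d γ η => ?_⟩
    have h := hco a c d e γ η (t d)
    have ht : t d ≫ η = t c := @Subsingleton.elim _ (sub c e) _ _
    rw [ht] at h
    have := eq_mul_inv_of_mul_eq h
    rw [this]
    group
    rw [mul_comm (ω c d e η (t d))]
end
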